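/- Let J₁ = −1/2, J₂ = (1+√2)/2, J₃ = √2/2. Then for every (u,v,w) in the Gram set 𝒢 one has −1 − √2 ≤ J₁u + J₂v + J₃w ≤ (10 + √2)/8. The lower bound is attained at (u,v,w) = (1, −1, −1) ∈ 𝒢, and the upper bound is attained at (u,v,w) = ((3√2 − 2)/4, 2 − 3/(2√2), (3√2 − 1)/4) ∈ 𝒢. -/
import Mathlib

def gramSet : Set (ℝ × ℝ × ℝ) :=
  {p | (-1 ≤ p.1 ∧ p.1 ≤ 1) ∧ (-1 ≤ p.2.1 ∧ p.2.1 ≤ 1) ∧ (-1 ≤ p.2.2 ∧ p.2.2 ≤ 1) ∧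
    1 - p.1 ^ 2 - p.2.1 ^ 2 - p.2.2 ^ 2 + 2 * p.1 * p.2.1 * p.2.2 ≥ 0}

set_option maxHeartbeats 2000000 in
theorem energy_bounds_standard_example :
    (∀ u v w : ℝ, (u, v, w) ∈ gramSet →
      -1 - Real.sqrt 2 ≤
          (-1 / 2) * u + ((1 + Real.sqrt 2) / 2) * v + (Real.sqrt 2 / 2) * w ∧
        (-1 / 2) * u + ((1 + Real.sqrt 2) / 2) * v + (Real.sqrt 2 / 2) * w
          ≤ (10 + Real.sqrt 2) / 8) ∧
    ((1, -1, -1) : ℝ × ℝ × ℝ) ∈ gramSet ∧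
    (-1 / 2) * 1 + ((1 + Real.sqrt 2) / 2) * (-1) + (Real.sqrt 2 / 2) * (-1)
      = -1 - Real.sqrt 2 ∧
    (((3 * Real.sqrt 2 - 2) / 4, 2 - 3 / (2 * Real.sqrt 2), (3 * Real.sqrt 2 - 1) / 4) :
        ℝ × ℝ × ℝ) ∈ gramSet ∧
    (-1 / 2) * ((3 * Real.sqrt 2 - 2) / 4)
        + ((1 + Real.sqrt 2) / 2) * (2 - 3 / (2 * Real.sqrt 2))
        + (Real.sqrt 2 / 2) * ((3 * Real.sqrt 2 - 1) / 4)
      = (10 + Real.sqrt 2) / 8 := by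
  set s := Real.sqrt 2 with hs_def
  have hs : s ^ 2 = 2 := Real.sq_sqrt (by norm_num)
  have hs1 : (1:ℝ) < s := by
    nlinarith [Real.sqrt_nonneg 2, hs]
  have hs2 : s < 2 := by nlinarith [hs]
  have hs0 : (0:ℝ) < s := by linarith
  have hvrw : 2 - 3 / (2 * s) = (8 - 3 * s) / 4 := by
    field_simp
    nlinarith [hs]
  refine ⟨?_, ?_, ?_, ?_, ?_⟩
  · intro u v w hmem
    obtain ⟨⟨hu1, hu2⟩, ⟨hv1, hv2⟩, ⟨hw1, hw2⟩, hQ'⟩ := hmem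
    have hu1 : -1 ≤ u := hu1
    have hu2 : u ≤ 1 := hu2
    have hv1 : -1 ≤ v := hv1
    have hv2 : v ≤ 1 := hv2
    have hw1 : -1 ≤ w := hw1
    have hw2 : w ≤ 1 := hw2
    have hQ : 1 - u ^ 2 - v ^ 2 - w ^ 2 + 2 * u * v * w ≥ 0 := hQ'
    constructor
    · nlinarith [hQ]
    · -- key: v*w - u ≤ A := (2+s)(1-v²)/4 + (2-s)(1-w²)/2
      have ha : (0:ℝ) ≤ 1 - v^2 := by nlinarith
      have hb : (0:ℝ) ≤ 1 - w^2 := by nlinarith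
      obtain ⟨A1, hA1⟩ : ∃ x : ℝ, x = (2 + s) * (1 - v^2) / 4 := ⟨_, rfl⟩
      obtain ⟨B1, hB1⟩ : ∃ x : ℝ, x = (2 - s) * (1 - w^2) / 2 := ⟨_, rfl⟩
      have hab : A1 * B1 = (1 - v^2) * (1 - w^2) / 4 := by
        rw [hA1, hB1]
        linear_combination (-((1 - v^2) * (1 - w^2)) / 8) * hs
      have hQ2 : (1 - v^2) * (1 - w^2) - (v*w - u)^2 ≥ 0 := by nlinarith [hQ]
      have hsq : (v * w - u)^2 ≤ (A1 + B1)^2 := by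
        nlinarith [hQ2, hab, sq_nonneg (A1 - B1)]
      have hApos : 0 ≤ A1 + B1 := by
        rw [hA1, hB1]
        have h1 : (0:ℝ) ≤ (2 + s) * (1 - v^2) := mul_nonneg (by linarith) ha
        have h2 : (0:ℝ) ≤ (2 - s) * (1 - w^2) := mul_nonneg (by linarith) hb
        linarith
      have key : v * w - u ≤ (2 + s) * (1 - v^2) / 4 + (2 - s) * (1 - w^2) / 2 := by
        rw [← hA1, ← hB1]
        nlinarith [hsq, hApos]
      have hT : (0:ℝ) ≤ (2 + s) / 8 * (v + (2 - s) * w - s)^2 :=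
        mul_nonneg (by linarith) (sq_nonneg _)
      have hid : (10 + s) / 8 - ((-1 / 2) * u + ((1 + s) / 2) * v + (s / 2) * w)
          = (1/2) * ((2 + s) * (1 - v^2) / 4 + (2 - s) * (1 - w^2) / 2 - (v * w - u))
            + (2 + s) / 8 * (v + (2 - s) * w - s)^2 := by
        linear_combination (-s/8 - 1/4 + v/4 - s*w/4 - s*w^2/8 + w^2/4 + v*w/4) * hs
      linarith [key, hT, hid.ge, hid.le]
  · refine ⟨⟨by norm_num, by norm_num⟩, ⟨by norm_num, by norm_num⟩, ⟨by norm_num, by norm_num⟩, by norm_num⟩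
  · ring
  · have hs3 : s ^ 3 = 2 * s := by
      calc s ^ 3 = s ^ 2 * s := by ring
      _ = 2 * s := by rw [hs]
    refine ⟨⟨?_, ?_⟩, ⟨?_, ?_⟩, ⟨?_, ?_⟩, ?_⟩
    · show -1 ≤ (3 * s - 2) / 4; linarith
    · show (3 * s - 2) / 4 ≤ 1; linarith
    · show -1 ≤ 2 - 3 / (2 * s); rw [hvrw]; linarith
    · show 2 - 3 / (2 * s) ≤ 1; rw [hvrw]; nlinarith [hs]
    · show -1 ≤ (3 * s - 1) / 4; linarith
    · show (3 * s - 1) / 4 ≤ 1; nlinarith [hs]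
    · show 1 - ((3 * s - 2) / 4) ^ 2 - (2 - 3 / (2 * s)) ^ 2 - ((3 * s - 1) / 4) ^ 2
          + 2 * ((3 * s - 2) / 4) * (2 - 3 / (2 * s)) * ((3 * s - 1) / 4) ≥ 0
      rw [hvrw]
      nlinarith [hs, hs3]
  · rw [hvrw]
    ring
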